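/- Let n ≥ r ≥ 2, let u ∈ ℝⁿ be the all-ones vector, let A be an n×(r−1) real matrix of rank r−1 with uᵀA = 0, let α ≠ 0 be real, and set X = (1/α)·(Aᵀ·A)⁻¹·Aᵀ (the rescaled Moore–Penrose left inverse of A). Then: (1) X·A = (1/α)·I_{r−1}; (2) the matrix Φ* = I_n + ((α−1)/α)·Xᵀ·(X·Xᵀ)⁻¹·(Aᵀ·A)⁻¹·Aᵀ simplifies to Φ* = I_n + α(α−1)·A·X; and (3) Φ* acts as a Protourgleichung: Φ*·((1/n)·u + A·v) = (1/n)·u + α·(A·v) for every v ∈ ℝ^{r−1}. -/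

import Mathlib

/-!
Since `AᵀA` is invertible, `P = (AᵀA)⁻¹Aᵀ` satisfies `PA = 1` and `PPᵀ = (AᵀA)⁻¹`, so the right
pseudo-inverse `Pᵀ(PPᵀ)⁻¹` of `P` is `A` again. For `X = α⁻¹P` this reads `Xᵀ(XXᵀ)⁻¹ = αA`, which
collapses `Φ*` to `1 + α(α - 1)·AX`. Vanishing column sums give `Xu = 0`, and `XA = α⁻¹` makes
`AX` act as `α⁻¹` on the range of `A`, so `Φ*` fixes `u` and scales `Av` by `1 + (α - 1) = α`.
-/

open Matrix

namespace Matrix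

variable {m k K : Type*} [Fintype m]

theorem transpose_mulVec_one_eq_zero [NonAssocSemiring K] {A : Matrix m k K}
    (hA : ∀ j, ∑ i, A i j = 0) : Aᵀ *ᵥ 1 = 0 := by
  ext j
  simp only [mulVec, dotProduct, transpose_apply, Pi.one_apply, mul_one, Pi.zero_apply]
  exact hA j

variable [Fintype k] [DecidableEq k]

theorem isUnit_of_rank_eq_card [Field K] {B : Matrix k k K} (h : B.rank = Fintype.card k) :
    IsUnit B := by
  rw [← mulVec_surjective_iff_isUnit, ← coe_mulVecLin, ← LinearMap.range_eq_top]
  apply Submodule.eq_top_of_finrank_eq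
  rw [Module.finrank_fintype_fun_eq_card]
  exact h

theorem isUnit_transpose_mul_self_of_rank_eq [Field K] [LinearOrder K] [IsStrictOrderedRing K]
    {A : Matrix m k K} (h : A.rank = Fintype.card k) : IsUnit (Aᵀ * A) :=
  isUnit_of_rank_eq_card (by rwa [rank_transpose_mul_self])

section LeftPinv

variable [CommRing K]

noncomputable abbrev leftPinv (A : Matrix m k K) : Matrix k m K := (Aᵀ * A)⁻¹ * Aᵀ

variable {A : Matrix m k K}

theorem transpose_leftPinv : (leftPinv A)ᵀ = A * (Aᵀ * A)⁻¹ := by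
  rw [transpose_mul, transpose_nonsing_inv, transpose_mul, transpose_transpose]

theorem leftPinv_mul_self (hA : IsUnit (Aᵀ * A)) : leftPinv A * A = 1 := by
  rw [Matrix.mul_assoc]
  exact nonsing_inv_mul _ ((isUnit_iff_isUnit_det _).mp hA)

theorem leftPinv_mul_transpose_leftPinv (hA : IsUnit (Aᵀ * A)) :
    leftPinv A * (leftPinv A)ᵀ = (Aᵀ * A)⁻¹ := by
  rw [transpose_leftPinv, ← Matrix.mul_assoc, leftPinv_mul_self hA, Matrix.one_mul]

theorem transpose_leftPinv_mul_inv (hA : IsUnit (Aᵀ * A)) :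
    (leftPinv A)ᵀ * (leftPinv A * (leftPinv A)ᵀ)⁻¹ = A := by
  have hdet := (isUnit_iff_isUnit_det _).mp hA
  rw [leftPinv_mul_transpose_leftPinv hA, nonsing_inv_nonsing_inv _ hdet, transpose_leftPinv,
    Matrix.mul_assoc, nonsing_inv_mul _ hdet, Matrix.mul_one]

end LeftPinv

theorem transpose_smul_leftPinv_mul_inv [Field K] {A : Matrix m k K} (hA : IsUnit (Aᵀ * A))
    {c : K} (hc : c ≠ 0) :
    (c • leftPinv A)ᵀ * ((c • leftPinv A) * (c • leftPinv A)ᵀ)⁻¹ = c⁻¹ • A := by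
  have hdet : IsUnit (leftPinv A * (leftPinv A)ᵀ).det := by
    rw [leftPinv_mul_transpose_leftPinv hA]
    exact isUnit_nonsing_inv_det _ ((isUnit_iff_isUnit_det _).mp hA)
  have hsq :
      (c • leftPinv A) * (c • leftPinv A)ᵀ = (c * c) • (leftPinv A * (leftPinv A)ᵀ) := by
    rw [transpose_smul, Matrix.smul_mul, Matrix.mul_smul, smul_smul]
  have : Invertible (c * c) := invertibleOfNonzero (mul_ne_zero hc hc)
  rw [hsq, inv_smul _ _ hdet, invOf_eq_inv, transpose_smul, Matrix.smul_mul, Matrix.mul_smul,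
    smul_smul, transpose_leftPinv_mul_inv hA]
  congr 1
  field_simp

theorem one_add_smul_mul_mulVec_add_mulVec [DecidableEq m] [Field K] {A : Matrix m k K}
    {X : Matrix k m K} {α : K} (hα : α ≠ 0) (hXA : X * A = α⁻¹ • 1) {w : m → K}
    (hXw : X *ᵥ w = 0) (v : k → K) :
    (1 + (α * (α - 1)) • (A * X)) *ᵥ (w + A *ᵥ v) = w + α • A *ᵥ v := by
  have hXAv : X *ᵥ (A *ᵥ v) = α⁻¹ • v := by
    rw [mulVec_mulVec, hXA, smul_mulVec, one_mulVec]
  rw [add_mulVec, one_mulVec, smul_mulVec, ← mulVec_mulVec, mulVec_add, hXw, hXAv, zero_add,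
    mulVec_smul, smul_smul, show α * (α - 1) * α⁻¹ = α - 1 by field_simp]
  module

end Matrix

theorem pseudoinverse_states_protourgleichung_general
    (n r : ℕ)
    (u : Fin n → ℝ) (hu : u = fun _ => 1)
    (A : Matrix (Fin n) (Fin (r - 1)) ℝ) (hArank : A.rank = r - 1)
    (hA : ∀ j, ∑ i, A i j = 0)
    (α : ℝ) (hα : α ≠ 0)
    (X : Matrix (Fin (r - 1)) (Fin n) ℝ)
    (hX : X = α⁻¹ • ((Aᵀ * A)⁻¹ * Aᵀ))
    (Φ : Matrix (Fin n) (Fin n) ℝ)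
    (hΦ : Φ = 1 + ((α - 1) / α) • (Xᵀ * (X * Xᵀ)⁻¹ * (Aᵀ * A)⁻¹ * Aᵀ)) :
    X * A = α⁻¹ • 1 ∧
    Φ = 1 + (α * (α - 1)) • (A * X) ∧
    ∀ v : Fin (r - 1) → ℝ,
      Φ.mulVec ((n : ℝ)⁻¹ • u + A.mulVec v) =
        (n : ℝ)⁻¹ • u + α • A.mulVec v := by
  have hB : IsUnit (Aᵀ * A) :=
    isUnit_transpose_mul_self_of_rank_eq (by rw [hArank, Fintype.card_fin])
  have hXA : X * A = α⁻¹ • 1 := by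
    rw [hX, smul_mul, leftPinv_mul_self hB]
  have hXu : X *ᵥ u = 0 := by
    rw [hX, hu, smul_mulVec, ← mulVec_mulVec, ← Pi.one_def, transpose_mulVec_one_eq_zero hA,
      mulVec_zero, smul_zero]
  have hΦ' : Φ = 1 + (α * (α - 1)) • (A * X) := by
    rw [hΦ, Matrix.mul_assoc (Xᵀ * _), hX, transpose_smul_leftPinv_mul_inv hB (inv_ne_zero hα),
      inv_inv, smul_mul, Matrix.mul_smul, smul_smul, smul_smul]
    congr 2
    field_simp
  have hXw : X *ᵥ ((n : ℝ)⁻¹ • u) = 0 := by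
    rw [mulVec_smul, hXu, smul_zero]
  refine ⟨hXA, hΦ', fun v => ?_⟩
  rw [hΦ']
  exact one_add_smul_mul_mulVec_add_mulVec hα hXA hXw v

/-- When `X = (1/α)·(AᵀA)⁻¹·Aᵀ` is (the rescaling of) the
Moore–Penrose left inverse of `A`, then (1) `X·A = (1/α)·I`; (2) the
Frobenius-minimal Born matrix `Φ* = I + ((α−1)/α)·Xᵀ·(XXᵀ)⁻¹·(AᵀA)⁻¹·Aᵀ`
simplifies to `Φ* = I + α(α−1)·A·X`; and (3) `Φ*` acts as a Protourgleichung: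
`Φ*·((1/n)·u + A·v) = (1/n)·u + α·(A·v)`. -/
theorem pseudoinverse_states_protourgleichung
    (n r : ℕ) (hr : 2 ≤ r) (hnr : r ≤ n)
    (u : Fin n → ℝ) (hu : u = fun _ => 1)
    (A : Matrix (Fin n) (Fin (r - 1)) ℝ) (hArank : A.rank = r - 1)
    (hA : ∀ j, ∑ i, A i j = 0)
    (α : ℝ) (hα : α ≠ 0)
    (X : Matrix (Fin (r - 1)) (Fin n) ℝ)
    (hX : X = α⁻¹ • ((Aᵀ * A)⁻¹ * Aᵀ))
    (Φ : Matrix (Fin n) (Fin n) ℝ)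
    (hΦ : Φ = 1 + ((α - 1) / α) • (Xᵀ * (X * Xᵀ)⁻¹ * (Aᵀ * A)⁻¹ * Aᵀ)) :
    X * A = α⁻¹ • 1 ∧
    Φ = 1 + (α * (α - 1)) • (A * X) ∧
    ∀ v : Fin (r - 1) → ℝ,
      Φ.mulVec ((n : ℝ)⁻¹ • u + A.mulVec v) =
        (n : ℝ)⁻¹ • u + α • A.mulVec v :=
  pseudoinverse_states_protourgleichung_general n r u hu A hArank hA α hα X hX Φ hΦ
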